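/- For κ > 0 and p ≥ 2, the Bessel ratio satisfies κ A_p'(κ) - A_p(κ) < 0, i.e., κ A_p'(κ) < A_p(κ). -/

import Mathlib

open Real

/-- Modified Bessel function of the first kind, `I_v(κ)`. -/
noncomputable def besselI (v κ : ℝ) : ℝ :=
  ∑' q : ℕ, (1 / (q.factorial * Real.Gamma (q + v + 1))) * (κ / 2) ^ ((2 * q : ℝ) + v)

/-- The Bessel ratio `A_p(κ) = I_{p/2}(κ) / I_{p/2-1}(κ)`. -/
noncomputable def Ap (p : ℕ) (κ : ℝ) : ℝ :=
  besselI (p / 2 : ℝ) κ / besselI ((p / 2 : ℝ) - 1) κ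

/-!
Write `I_v(x) = (x/2)^v h_v(x²/4)` with the entire series `h_v(t) = ∑ t^q / (q! Γ(q+v+1))`.
For `v = p/2 - 1` this gives `A_p(x) = (x/2) Q(x²/4)` with `Q = h_{v+1} / h_v`, hence
`x A_p'(x) - A_p(x) = (x³/4) Q'(x²/4)`. As `h_v' = h_{v+1}`, the sign of `Q'` is that of the
Turán expression `h_{v+2} h_v - h_{v+1}²`. After an index shift and symmetrisation in `(i, j)`,
twice each Cauchy-product coefficient of this expression is a sum of the terms
`-c_i c_j (i - j)² / ((i+v+1)(j+v+1))`, `c_i = 1 / (i! Γ(i+v+1))`, which are nonpositive and not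
all zero.
-/

open Finset Filter Topology
open scoped Nat

section PowerSeries

variable {R : Type*} [NormedCommRing R] [CompleteSpace R]

theorem hasSum_sum_antidiagonal_mul_pow {a b : ℕ → R} {t : R}
    (ha : Summable fun n => ‖a n * t ^ n‖) (hb : Summable fun n => ‖b n * t ^ n‖) :
    HasSum (fun n => (∑ kl ∈ antidiagonal n, a kl.1 * b kl.2) * t ^ n)
      ((∑' n, a n * t ^ n) * ∑' n, b n * t ^ n) := by
  rw [tsum_mul_tsum_eq_tsum_sum_antidiagonal_of_summable_norm ha hb]
  refine (summable_norm_sum_mul_antidiagonal_of_summable_norm ha hb).of_norm.hasSum.congr_fun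
    fun n => ?_
  rw [sum_mul]
  refine sum_congr rfl fun kl hkl => ?_
  rw [← mem_antidiagonal.mp hkl, pow_add]
  ring

end PowerSeries

theorem hasDerivAt_tsum_mul_pow {a b : ℕ → ℝ} {t : ℝ}
    (hab : ∀ n : ℕ, ((n : ℝ) + 1) * a (n + 1) = b n)
    (hb : ∀ r : ℝ, Summable fun n => ‖b n * r ^ n‖) (ha : Summable fun n => a n * t ^ n) :
    HasDerivAt (fun x => ∑' n, a n * x ^ n) (∑' n, b n * t ^ n) t := by
  set r := |t| + 1
  have ht : t ∈ Set.Ioo (-r) r := abs_lt.mp (lt_add_one _)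
  have hbound : ∀ n y, y ∈ Set.Ioo (-r) r →
      ‖a n * (n * y ^ (n - 1))‖ ≤ ‖a n‖ * (n * r ^ (n - 1)) := by
    intro n y hy
    rw [norm_mul, norm_mul, norm_pow, Real.norm_natCast]
    gcongr
    exact (abs_lt.mpr hy).le
  have hsum : Summable fun n => ‖a n‖ * (n * r ^ (n - 1)) := by
    rw [← summable_nat_add_iff 1]
    refine (hb r).congr fun n => ?_
    rw [← hab, norm_mul, norm_mul, norm_pow,
      Real.norm_of_nonneg (by positivity : (0 : ℝ) ≤ n + 1),
      Real.norm_of_nonneg (by positivity : (0 : ℝ) ≤ r)]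
    push_cast
    ring
  have hderiv := hasDerivAt_tsum_of_isPreconnected hsum isOpen_Ioo isPreconnected_Ioo
    (g := fun n x => a n * x ^ n) (fun n y _ => (hasDerivAt_pow n y).const_mul (a n))
    hbound ht ha ht
  refine hderiv.congr_deriv ?_
  rw [Summable.tsum_eq_zero_add (.of_norm_bounded hsum fun n => hbound n t ht)]
  simp only [CharP.cast_eq_zero, zero_mul, mul_zero, zero_add, Nat.add_sub_cancel]
  refine tsum_congr fun n => ?_
  rw [← hab]
  push_cast
  ring

noncomputable def besselCoeff (v : ℝ) (q : ℕ) : ℝ := 1 / (q ! * Gamma (q + v + 1))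

noncomputable def besselSeries (v t : ℝ) : ℝ := ∑' q : ℕ, besselCoeff v q * t ^ q

section Bessel

variable {v : ℝ}

theorem besselCoeff_pos (hv : -1 < v) (q : ℕ) : 0 < besselCoeff v q := by
  have hq : 0 < (q : ℝ) + v + 1 := by linarith [q.cast_nonneg (α := ℝ)]
  exact one_div_pos.mpr (mul_pos (mod_cast q.factorial_pos) (Gamma_pos_of_pos hq))

theorem besselCoeff_add_one (hv : -1 < v) (q : ℕ) :
    besselCoeff (v + 1) q = besselCoeff v q / (q + v + 1) := by
  have hq : (q : ℝ) + v + 1 ≠ 0 := by linarith [q.cast_nonneg (α := ℝ)]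
  rw [besselCoeff, besselCoeff, show (q : ℝ) + (v + 1) + 1 = q + v + 1 + 1 by ring,
    Gamma_add_one hq]
  field_simp

theorem succ_mul_besselCoeff_succ (v : ℝ) (q : ℕ) :
    ((q : ℝ) + 1) * besselCoeff v (q + 1) = besselCoeff (v + 1) q := by
  rw [besselCoeff, besselCoeff, Nat.factorial_succ,
    show ((q + 1 : ℕ) : ℝ) + v + 1 = q + (v + 1) + 1 by push_cast; ring]
  push_cast
  rw [one_div, one_div, mul_inv, mul_inv, mul_inv, ← mul_assoc, ← mul_assoc,
    mul_inv_cancel₀ (by positivity), one_mul]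

theorem besselCoeff_succ (hv : -1 < v) (q : ℕ) :
    besselCoeff v (q + 1) = besselCoeff v q / ((q + 1) * (q + v + 1)) := by
  rw [div_mul_eq_div_div_swap, ← besselCoeff_add_one hv, ← succ_mul_besselCoeff_succ,
    mul_div_cancel_left₀ _ (by positivity)]

theorem besselCoeff_le_div_factorial (hv : 0 ≤ v) (q : ℕ) :
    besselCoeff v q ≤ besselCoeff v 0 / q ! := by
  induction q with
  | zero => simp
  | succ q ih =>
    have hq : (1 : ℝ) ≤ q + v + 1 := by linarith [q.cast_nonneg (α := ℝ)]
    calc besselCoeff v (q + 1) = besselCoeff v q / ((q + 1) * (q + v + 1)) :=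
          besselCoeff_succ (by linarith) q
      _ ≤ besselCoeff v q / (q + 1) := by
          gcongr
          · exact (besselCoeff_pos (by linarith) q).le
          · exact le_mul_of_one_le_right (by positivity) hq
      _ ≤ besselCoeff v 0 / (q + 1)! := by
          rw [Nat.factorial_succ, Nat.cast_mul, mul_comm, ← div_div]
          push_cast
          gcongr

theorem summable_norm_besselCoeff_mul_pow (hv : -1 < v) (t : ℝ) :
    Summable fun q => ‖besselCoeff v q * t ^ q‖ := by
  rw [← summable_nat_add_iff 1]
  refine .of_nonneg_of_le (fun _ => norm_nonneg _) (fun q => ?_)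
    (((summable_pow_div_factorial |t|).mul_left (|t| * besselCoeff (v + 1) 0)))
  have hshift : besselCoeff v (q + 1) ≤ besselCoeff (v + 1) q := by
    rw [← succ_mul_besselCoeff_succ]
    exact le_mul_of_one_le_left (besselCoeff_pos hv _).le (by linarith [q.cast_nonneg (α := ℝ)])
  calc ‖besselCoeff v (q + 1) * t ^ (q + 1)‖ = besselCoeff v (q + 1) * (|t| ^ q * |t|) := by
        rw [norm_mul, norm_pow, Real.norm_eq_abs, Real.norm_eq_abs,
          abs_of_pos (besselCoeff_pos hv _), pow_succ]
    _ ≤ besselCoeff (v + 1) 0 / q ! * (|t| ^ q * |t|) := by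
        gcongr
        exact hshift.trans (besselCoeff_le_div_factorial (by linarith) q)
    _ = |t| * besselCoeff (v + 1) 0 * (|t| ^ q / q !) := by ring

theorem summable_besselCoeff_mul_pow (hv : -1 < v) (t : ℝ) :
    Summable fun q => besselCoeff v q * t ^ q :=
  (summable_norm_besselCoeff_mul_pow hv t).of_norm

theorem besselSeries_pos (hv : -1 < v) {t : ℝ} (ht : 0 ≤ t) : 0 < besselSeries v t := by
  refine (summable_besselCoeff_mul_pow hv t).tsum_pos
    (fun q => mul_nonneg (besselCoeff_pos hv q).le (by positivity)) 0 ?_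
  simpa using besselCoeff_pos hv 0

theorem hasDerivAt_besselSeries (hv : -1 < v) (t : ℝ) :
    HasDerivAt (besselSeries v) (besselSeries (v + 1) t) t :=
  hasDerivAt_tsum_mul_pow (succ_mul_besselCoeff_succ v)
    (summable_norm_besselCoeff_mul_pow (by linarith)) (summable_besselCoeff_mul_pow hv t)

end Bessel

section Turan

variable {v : ℝ}

theorem besselCoeff_pair (hv : -1 < v) (i j : ℕ) :
    (i : ℝ) * (besselCoeff (v + 1) i * besselCoeff v j - besselCoeff v i * besselCoeff (v + 1) j)
      + j * (besselCoeff (v + 1) j * besselCoeff v i - besselCoeff v j * besselCoeff (v + 1) i)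
      = -(besselCoeff v i * besselCoeff v j * ((i : ℝ) - j) ^ 2)
          / ((i + v + 1) * (j + v + 1)) := by
  have hi : (i : ℝ) + v + 1 ≠ 0 := by linarith [i.cast_nonneg (α := ℝ)]
  have hj : (j : ℝ) + v + 1 ≠ 0 := by linarith [j.cast_nonneg (α := ℝ)]
  rw [besselCoeff_add_one hv, besselCoeff_add_one hv]
  field_simp
  ring

theorem sum_antidiagonal_besselCoeff_turan_eq (n : ℕ) :
    ∑ kl ∈ antidiagonal n, (besselCoeff (v + 2) kl.1 * besselCoeff v kl.2
        - besselCoeff (v + 1) kl.1 * besselCoeff (v + 1) kl.2)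
      = ∑ kl ∈ antidiagonal (n + 1), (kl.1 : ℝ) *
          (besselCoeff (v + 1) kl.1 * besselCoeff v kl.2
            - besselCoeff v kl.1 * besselCoeff (v + 1) kl.2) := by
  rw [Nat.sum_antidiagonal_succ]
  simp only [CharP.cast_eq_zero, zero_mul, zero_add]
  refine sum_congr rfl fun kl _ => ?_
  push_cast
  rw [mul_sub, ← mul_assoc, ← mul_assoc, succ_mul_besselCoeff_succ, succ_mul_besselCoeff_succ,
    add_assoc, one_add_one_eq_two]

theorem sum_antidiagonal_besselCoeff_turan_neg (hv : -1 < v) (n : ℕ) :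
    ∑ kl ∈ antidiagonal n, (besselCoeff (v + 2) kl.1 * besselCoeff v kl.2
        - besselCoeff (v + 1) kl.1 * besselCoeff (v + 1) kl.2) < 0 := by
  rw [sum_antidiagonal_besselCoeff_turan_eq]
  set f : ℕ × ℕ → ℝ := fun kl => (kl.1 : ℝ) *
    (besselCoeff (v + 1) kl.1 * besselCoeff v kl.2 - besselCoeff v kl.1 * besselCoeff (v + 1) kl.2)
  suffices ∑ kl ∈ antidiagonal (n + 1), (f kl + f kl.swap) < 0 by
    rw [sum_add_distrib, Nat.sum_antidiagonal_swap] at this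
    linarith
  have hpair : ∀ kl : ℕ × ℕ, f kl + f kl.swap = -(besselCoeff v kl.1 * besselCoeff v kl.2 *
      ((kl.1 : ℝ) - kl.2) ^ 2) / ((kl.1 + v + 1) * (kl.2 + v + 1)) :=
    fun kl => besselCoeff_pair hv kl.1 kl.2
  have hden : ∀ i : ℕ, 0 < (i : ℝ) + v + 1 := fun i => by linarith [i.cast_nonneg (α := ℝ)]
  refine sum_neg' (fun kl _ => ?_) ⟨(0, n + 1), by simp, ?_⟩ <;> rw [hpair]
  · exact div_nonpos_of_nonpos_of_nonneg (neg_nonpos.mpr (mul_nonneg (mul_nonneg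
      (besselCoeff_pos hv _).le (besselCoeff_pos hv _).le) (sq_nonneg _)))
      (mul_pos (hden _) (hden _)).le
  · have hsq : 0 < (((0 : ℕ) : ℝ) - (n + 1 : ℕ)) ^ 2 := by
      push_cast
      nlinarith [n.cast_nonneg (α := ℝ)]
    exact div_neg_of_neg_of_pos
      (neg_neg_of_pos (mul_pos (mul_pos (besselCoeff_pos hv _) (besselCoeff_pos hv _)) hsq))
      (mul_pos (hden _) (hden _))

theorem besselSeries_mul_lt_sq (hv : -1 < v) {t : ℝ} (ht : 0 < t) :
    besselSeries (v + 2) t * besselSeries v t < besselSeries (v + 1) t ^ 2 := by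
  have hsummable : ∀ w : ℝ, -1 < w → Summable fun q => ‖besselCoeff w q * t ^ q‖ :=
    fun w hw => summable_norm_besselCoeff_mul_pow hw t
  have hdiff := (hasSum_sum_antidiagonal_mul_pow (hsummable (v + 2) (by linarith))
    (hsummable v hv)).sub (hasSum_sum_antidiagonal_mul_pow (hsummable (v + 1) (by linarith))
    (hsummable (v + 1) (by linarith)))
  simp only [← sub_mul, ← sum_sub_distrib] at hdiff
  have := hasSum_lt (fun n => (mul_neg_of_neg_of_pos (sum_antidiagonal_besselCoeff_turan_neg hv n)
    (pow_pos ht n)).le) (mul_neg_of_neg_of_pos (sum_antidiagonal_besselCoeff_turan_neg hv 0)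
    (pow_pos ht 0)) hdiff hasSum_zero
  rw [besselSeries, besselSeries, besselSeries, sq]
  linarith

end Turan

theorem besselI_eq_rpow_mul_besselSeries (v : ℝ) {x : ℝ} (hx : 0 < x) :
    besselI v x = (x / 2) ^ v * besselSeries v (x ^ 2 / 4) := by
  rw [besselI, besselSeries, ← tsum_mul_left]
  refine tsum_congr fun q => ?_
  rw [show 2 * (q : ℝ) + v = v + (2 * q : ℕ) by push_cast; ring, rpow_add (by positivity),
    rpow_natCast, pow_mul, besselCoeff]
  ring

theorem besselI_add_one_div_besselI {v : ℝ} (hv : -1 < v) {x : ℝ} (hx : 0 < x) :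
    besselI (v + 1) x / besselI v x
      = x / 2 * (besselSeries (v + 1) (x ^ 2 / 4) / besselSeries v (x ^ 2 / 4)) := by
  have hW := besselSeries_pos hv (by positivity : 0 ≤ x ^ 2 / 4)
  have hpow : 0 < (x / 2) ^ v := rpow_pos_of_pos (by positivity) v
  rw [besselI_eq_rpow_mul_besselSeries _ hx, besselI_eq_rpow_mul_besselSeries _ hx,
    rpow_add (by positivity), rpow_one]
  field_simp

theorem hasDerivAt_besselSeries_div {v : ℝ} (hv : -1 < v) {t : ℝ} (ht : 0 ≤ t) :
    HasDerivAt (fun s => besselSeries (v + 1) s / besselSeries v s)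
      ((besselSeries (v + 2) t * besselSeries v t - besselSeries (v + 1) t ^ 2)
        / besselSeries v t ^ 2) t := by
  have hU := hasDerivAt_besselSeries (v := v + 1) (by linarith) t
  rw [show v + 1 + 1 = v + 2 by ring] at hU
  exact (hU.div (hasDerivAt_besselSeries hv t) (besselSeries_pos hv ht).ne').congr_deriv (by ring)

theorem hasDerivAt_half_mul_comp_sq_div_four {Q : ℝ → ℝ} {Q' x : ℝ}
    (hQ : HasDerivAt Q Q' (x ^ 2 / 4)) :
    HasDerivAt (fun y => y / 2 * Q (y ^ 2 / 4)) (Q (x ^ 2 / 4) / 2 + x ^ 2 / 4 * Q') x := by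
  have hsq : HasDerivAt (fun y => y ^ 2 / 4) (x / 2) x :=
    ((hasDerivAt_pow 2 x).div_const 4).congr_deriv (by norm_num; ring)
  exact (((hasDerivAt_id x).div_const 2).mul (hQ.comp x hsq)).congr_deriv
    (by simp only [id, Function.comp_apply]; ring)

theorem stmt_9 (p : ℕ) (hp : 2 ≤ p) (κ : ℝ) (hκ : 0 < κ) :
    κ * deriv (Ap p) κ < Ap p κ := by
  have hv : -1 < (p : ℝ) / 2 - 1 := by
    have : (2 : ℝ) ≤ p := by exact_mod_cast hp
    linarith
  set v : ℝ := p / 2 - 1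
  set Q : ℝ → ℝ := fun s => besselSeries (v + 1) s / besselSeries v s
  have hAp : Ap p =ᶠ[𝓝 κ] fun x => x / 2 * Q (x ^ 2 / 4) := by
    filter_upwards [eventually_gt_nhds hκ] with x hx
    rw [← besselI_add_one_div_besselI hv hx, Ap, sub_add_cancel]
  have ht : 0 < κ ^ 2 / 4 := by positivity
  have hQ' := div_neg_of_neg_of_pos (sub_neg.mpr (besselSeries_mul_lt_sq hv ht))
    (pow_pos (besselSeries_pos hv ht.le) 2)
  rw [hAp.deriv_eq, (hasDerivAt_half_mul_comp_sq_div_four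
    (hasDerivAt_besselSeries_div hv ht.le)).deriv, hAp.eq_of_nhds]
  nlinarith [pow_pos hκ 3]
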